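/- Let K₀ ⊆ K₁ be as in condition (*) with K₁ infinite, let ξ and μ be finite partitions of K₁ by clopen sets such that every finite element of ξ is a singleton. Then there exist finite partitions by clopen sets ξ₀ = ξ ≺ ξ₁ ≺ ⋯ ≺ ξ_n such that: whenever A ∈ ξ_i \ ξ_{i+1}, A is the disjoint union of three distinct nonempty elements of ξ_{i+1}; for A ∈ ξ_i, A ∩ K₀ ≠ ∅ iff A ∈ ξ_{i−1} ∪ ξ_{i+1} (with ξ_{−1} = ξ_{n+1} = ∅); μ ≺ ξ_n; and all finite elements of ξ_n are singletons. -/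

import Mathlib

/-- A finite partition of a topological space by clopen sets. -/
def IsFiniteClopenPartition {K : Type*} [TopologicalSpace K] (ξ : Set (Set K)) : Prop :=
  ξ.Finite ∧ (∀ A ∈ ξ, IsClopen A ∧ A.Nonempty) ∧ ξ.PairwiseDisjoint id ∧ ⋃₀ ξ = Set.univ

/-- `η` refines `ξ`. -/
def PartRefines {K : Type*} (ξ η : Set (Set K)) : Prop :=
  ∀ A ∈ η, ∃ B ∈ ξ, A ⊆ B

/-!
Each piece of `ξ` is treated separately. It is cut along `μ`, and finite parts are cut into
points, giving clopen leaves that are infinite or singletons; an even number of leaves is made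
odd by halving an infinite leaf. The piece is then split down to its leaves along a ternary tree,
peeling off two leaves at a time, where a node meeting `K₀` is kept for one extra stage before
it is split. A leaf meeting `K₀` is kept for ever, and a leaf missing `K₀` has no isolated
points, so it can be split into three clopen pieces at every later stage. Hence the chains of
all pieces can be run in parallel and stopped at a common stage.
-/

open Set

section Partition

variable {K : Type*} [TopologicalSpace K] {A B E : Set K} {T S : Set (Set K)}

structure IsClopenPartition (A : Set K) (T : Set (Set K)) : Prop where
  finite : T.Finite
  isClopen_of_mem : ∀ B ∈ T, IsClopen B
  nonempty_of_mem : ∀ B ∈ T, B.Nonempty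
  pairwiseDisjoint : T.PairwiseDisjoint id
  sUnion_eq : ⋃₀ T = A

theorem isClopenPartition_univ_iff :
    IsClopenPartition univ T ↔ IsFiniteClopenPartition T :=
  ⟨fun h => ⟨h.finite, fun B hB => ⟨h.isClopen_of_mem B hB, h.nonempty_of_mem B hB⟩,
      h.pairwiseDisjoint, h.sUnion_eq⟩,
    fun ⟨hfin, hmem, hdisj, hunion⟩ =>
      ⟨hfin, fun B hB => (hmem B hB).1, fun B hB => (hmem B hB).2, hdisj, hunion⟩⟩

namespace IsClopenPartition

theorem subset (h : IsClopenPartition A T) (hB : B ∈ T) : B ⊆ A :=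
  h.sUnion_eq ▸ subset_sUnion_of_mem hB

theorem isClopen (h : IsClopenPartition A T) : IsClopen A := by
  rw [← h.sUnion_eq, sUnion_eq_biUnion]
  exact h.finite.isClopen_biUnion h.isClopen_of_mem

theorem singleton (hA : IsClopen A) (hne : A.Nonempty) : IsClopenPartition A {A} where
  finite := finite_singleton A
  isClopen_of_mem := by simpa using hA
  nonempty_of_mem := by simpa using hne
  pairwiseDisjoint := pairwiseDisjoint_singleton A id
  sUnion_eq := sUnion_singleton A

theorem insert (h : IsClopenPartition A T) (hB : IsClopen B) (hne : B.Nonempty)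
    (hd : Disjoint B A) : IsClopenPartition (B ∪ A) (insert B T) where
  finite := h.finite.insert B
  isClopen_of_mem := forall_mem_insert.2 ⟨hB, h.isClopen_of_mem⟩
  nonempty_of_mem := forall_mem_insert.2 ⟨hne, h.nonempty_of_mem⟩
  pairwiseDisjoint := h.pairwiseDisjoint.insert fun C hC _ => hd.mono_right (h.subset hC)
  sUnion_eq := by rw [sUnion_insert, h.sUnion_eq]

theorem of_subset (h : IsClopenPartition A T) (hS : S ⊆ T) : IsClopenPartition (⋃₀ S) S where
  finite := h.finite.subset hS
  isClopen_of_mem B hB := h.isClopen_of_mem B (hS hB)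
  nonempty_of_mem B hB := h.nonempty_of_mem B (hS hB)
  pairwiseDisjoint := h.pairwiseDisjoint.subset hS
  sUnion_eq := rfl

theorem sdiff_singleton_union (h : IsClopenPartition A T) (hE : E ∈ T)
    (hS : IsClopenPartition E S) : IsClopenPartition A (T \ {E} ∪ S) where
  finite := (h.finite.subset sdiff_subset).union hS.finite
  isClopen_of_mem := by
    rintro B (⟨hB, -⟩ | hB)
    exacts [h.isClopen_of_mem B hB, hS.isClopen_of_mem B hB]
  nonempty_of_mem := by
    rintro B (⟨hB, -⟩ | hB)
    exacts [h.nonempty_of_mem B hB, hS.nonempty_of_mem B hB]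
  pairwiseDisjoint := (h.pairwiseDisjoint.subset sdiff_subset).union hS.pairwiseDisjoint
    fun B hB C hC _ => (h.pairwiseDisjoint hB.1 hE hB.2).mono_right (hS.subset hC)
  sUnion_eq := by
    rw [sUnion_union, hS.sUnion_eq, union_comm, ← sUnion_insert, insert_sdiff_singleton,
      insert_eq_of_mem hE, h.sUnion_eq]

theorem biUnion (hT : IsClopenPartition A T) {S : Set K → Set (Set K)}
    (hS : ∀ B ∈ T, IsClopenPartition B (S B)) : IsClopenPartition A (⋃ B ∈ T, S B) where
  finite := hT.finite.biUnion fun B hB => (hS B hB).finite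
  isClopen_of_mem := by
    simp only [mem_iUnion₂]
    rintro E ⟨B, hB, hE⟩
    exact (hS B hB).isClopen_of_mem E hE
  nonempty_of_mem := by
    simp only [mem_iUnion₂]
    rintro E ⟨B, hB, hE⟩
    exact (hS B hB).nonempty_of_mem E hE
  pairwiseDisjoint := by
    simp only [PairwiseDisjoint, Set.Pairwise, mem_iUnion₂]
    rintro E ⟨B, hB, hE⟩ F ⟨C, hC, hF⟩ hEF
    obtain rfl | hBC := eq_or_ne B C
    · exact (hS B hB).pairwiseDisjoint hE hF hEF
    · exact (hT.pairwiseDisjoint hB hC hBC).mono ((hS B hB).subset hE) ((hS C hC).subset hF)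
  sUnion_eq := by
    simp only [sUnion_iUnion]
    rw [iUnion₂_congr fun B hB => (hS B hB).sUnion_eq, ← sUnion_eq_biUnion, hT.sUnion_eq]

end IsClopenPartition

end Partition

section SplitsInThree

variable {K : Type*} {T T' : Set (Set K)} {F : Set K}

def SplitsInThree (T : Set (Set K)) (F : Set K) : Prop :=
  ∃ B₁ ∈ T, ∃ B₂ ∈ T, ∃ B₃ ∈ T, B₁ ≠ B₂ ∧ B₁ ≠ B₃ ∧ B₂ ≠ B₃ ∧
    B₁.Nonempty ∧ B₂.Nonempty ∧ B₃.Nonempty ∧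
    Disjoint B₁ B₂ ∧ Disjoint B₁ B₃ ∧ Disjoint B₂ B₃ ∧ F = B₁ ∪ B₂ ∪ B₃

theorem SplitsInThree.mono (h : SplitsInThree T F) (hT : T ⊆ T') : SplitsInThree T' F :=
  let ⟨B₁, h₁, B₂, h₂, B₃, h₃, rest⟩ := h
  ⟨B₁, hT h₁, B₂, hT h₂, B₃, hT h₃, rest⟩

theorem SplitsInThree.nonempty (h : SplitsInThree T F) : F.Nonempty :=
  let ⟨_, _, _, _, _, _, _, _, _, ⟨x, hx⟩, _, _, _, _, _, hF⟩ := h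
  ⟨x, hF ▸ Or.inl (Or.inl hx)⟩

theorem SplitsInThree.notMem (h : SplitsInThree T F) (hT : T.PairwiseDisjoint id) : F ∉ T := by
  obtain ⟨B₁, h₁, B₂, h₂, -, -, h₁₂, -, -, ⟨x, hx⟩, ⟨y, hy⟩, -, -, -, -, rfl⟩ := h
  intro hF
  have e₁ : B₁ = B₁ ∪ B₂ ∪ _ := hT.elim_set h₁ hF x hx (Or.inl (Or.inl hx))
  have e₂ : B₂ = B₁ ∪ B₂ ∪ _ := hT.elim_set h₂ hF y hy (Or.inl (Or.inr hy))
  exact h₁₂ (e₁.trans e₂.symm)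

end SplitsInThree

section Triple

variable {K : Type*} [TopologicalSpace K] {B₁ B₂ B₃ : Set K}

theorem isClopenPartition_pair (h₁ : IsClopen B₁) (h₂ : IsClopen B₂) (n₁ : B₁.Nonempty)
    (n₂ : B₂.Nonempty) (d₁₂ : Disjoint B₁ B₂) : IsClopenPartition (B₁ ∪ B₂) {B₁, B₂} :=
  (IsClopenPartition.singleton h₂ n₂).insert h₁ n₁ d₁₂

theorem isClopenPartition_triple (h₁ : IsClopen B₁) (h₂ : IsClopen B₂) (h₃ : IsClopen B₃)
    (n₁ : B₁.Nonempty) (n₂ : B₂.Nonempty) (n₃ : B₃.Nonempty)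
    (d₁₂ : Disjoint B₁ B₂) (d₁₃ : Disjoint B₁ B₃) (d₂₃ : Disjoint B₂ B₃) :
    IsClopenPartition (B₁ ∪ B₂ ∪ B₃) {B₁, B₂, B₃} ∧ SplitsInThree {B₁, B₂, B₃} (B₁ ∪ B₂ ∪ B₃) := by
  refine ⟨?_, B₁, by simp, B₂, by simp, B₃, by simp, d₁₂.ne n₁.ne_empty, d₁₃.ne n₁.ne_empty,
    d₂₃.ne n₂.ne_empty, n₁, n₂, n₃, d₁₂, d₁₃, d₂₃, rfl⟩
  rw [union_assoc]
  exact (isClopenPartition_pair h₂ h₃ n₂ n₃ d₂₃).insert h₁ n₁ (disjoint_union_right.2 ⟨d₁₂, d₁₃⟩)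

end Triple

section Chain

variable {K : Type*} [TopologicalSpace K] {K₀ : Set K} {μ : Set (Set K)} {A : Set K}
  {T : Set (Set K)} {P Q : ℕ → Set (Set K)} {d : ℕ}

def IsFine (μ : Set (Set K)) (F : Set K) : Prop :=
  (∃ M ∈ μ, F ⊆ M) ∧ (F.Finite → ∃ x, F = {x})

/-- An unending version of the chains of the theorem: cut off at any stage after `d`, it
satisfies all requirements except that pieces of the first partition meeting `K₀` must survive
to the next stage, which `HasSplittingChain` adds. -/
structure IsSplittingChain (K₀ : Set K) (μ : Set (Set K)) (A : Set K) (P : ℕ → Set (Set K))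
    (d : ℕ) : Prop where
  isClopenPartition : ∀ i, IsClopenPartition A (P i)
  partRefines : ∀ i, PartRefines (P i) (P (i + 1))
  splitsInThree : ∀ i, ∀ F ∈ P i, F ∉ P (i + 1) → SplitsInThree (P (i + 1)) F
  meets_of_mem_succ : ∀ i, ∀ F ∈ P i, F ∈ P (i + 1) → (F ∩ K₀).Nonempty
  mem_adjacent_of_meets : ∀ i, ∀ F ∈ P (i + 1), (F ∩ K₀).Nonempty → F ∈ P i ∨ F ∈ P (i + 2)
  mem_pred_of_meets : ∀ i, d ≤ i → ∀ F ∈ P (i + 1), (F ∩ K₀).Nonempty → F ∈ P i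
  isFine : ∀ i, d ≤ i → ∀ F ∈ P i, IsFine μ F

def HasSplittingChain (K₀ : Set K) (μ : Set (Set K)) (A : Set K) (T : Set (Set K)) : Prop :=
  ∃ P d, IsSplittingChain K₀ μ A P d ∧ P 0 = T ∧ ∀ F ∈ T, (F ∩ K₀).Nonempty → F ∈ P 1

namespace IsSplittingChain

theorem mono (h : IsSplittingChain K₀ μ A P d) {d' : ℕ} (hd : d ≤ d') :
    IsSplittingChain K₀ μ A P d' :=
  { h with
    mem_pred_of_meets := fun i hi => h.mem_pred_of_meets i (hd.trans hi)
    isFine := fun i hi => h.isFine i (hd.trans hi) }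

theorem biUnion {P : Set K → ℕ → Set (Set K)} (hT : IsClopenPartition A T)
    (hP : ∀ B ∈ T, IsSplittingChain K₀ μ B (P B) d) :
    IsSplittingChain K₀ μ A (fun i => ⋃ B ∈ T, P B i) d := by
  have mem_iff : ∀ {i F}, F ∈ ⋃ B ∈ T, P B i ↔ ∃ B ∈ T, F ∈ P B i := by simp
  have sub : ∀ {B i}, B ∈ T → P B i ⊆ ⋃ B ∈ T, P B i :=
    fun {_ i} hB => subset_biUnion_of_mem (u := (P · i)) hB
  have unique : ∀ {B C i j F}, B ∈ T → C ∈ T → F ∈ P B i → F ∈ P C j → B = C :=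
    fun {B C i _ F} hB hC hFB hFC =>
      let ⟨x, hx⟩ := ((hP B hB).isClopenPartition i).nonempty_of_mem F hFB
      hT.pairwiseDisjoint.elim_set hB hC x (((hP B hB).isClopenPartition _).subset hFB hx)
        (((hP C hC).isClopenPartition _).subset hFC hx)
  refine ⟨fun i => hT.biUnion fun B hB => (hP B hB).isClopenPartition i, ?_, ?_, ?_, ?_, ?_, ?_⟩
  · intro i F hF
    obtain ⟨B, hB, hF⟩ := mem_iff.1 hF
    obtain ⟨G, hG, hFG⟩ := (hP B hB).partRefines i F hF
    exact ⟨G, sub hB hG, hFG⟩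
  · intro i F hF hF'
    obtain ⟨B, hB, hF⟩ := mem_iff.1 hF
    exact ((hP B hB).splitsInThree i F hF fun h => hF' (sub hB h)).mono (sub hB)
  · intro i F hF hF'
    obtain ⟨B, hB, hF⟩ := mem_iff.1 hF
    obtain ⟨C, hC, hF'⟩ := mem_iff.1 hF'
    obtain rfl := unique hB hC hF hF'
    exact (hP B hB).meets_of_mem_succ i F hF hF'
  · intro i F hF hmeets
    obtain ⟨B, hB, hF⟩ := mem_iff.1 hF
    exact ((hP B hB).mem_adjacent_of_meets i F hF hmeets).imp (sub hB ·) (sub hB ·)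
  · intro i hi F hF hmeets
    obtain ⟨B, hB, hF⟩ := mem_iff.1 hF
    exact sub hB ((hP B hB).mem_pred_of_meets i hi F hF hmeets)
  · intro i hi F hF
    obtain ⟨B, hB, hF⟩ := mem_iff.1 hF
    exact (hP B hB).isFine i hi F hF

theorem cons (hQ : IsSplittingChain K₀ μ A Q d) (hT : IsClopenPartition A T)
    (hrefines : PartRefines T (Q 0)) (hmeets : ∀ F ∈ T, F ∈ Q 0 → (F ∩ K₀).Nonempty)
    (hsplit : ∀ F ∈ T, F ∉ Q 0 → SplitsInThree (Q 0) F)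
    (hmem : ∀ F ∈ Q 0, (F ∩ K₀).Nonempty → F ∈ T ∨ F ∈ Q 1) :
    IsSplittingChain K₀ μ A (fun | 0 => T | i + 1 => Q i) (d + 1) where
  isClopenPartition
    | 0 => hT
    | i + 1 => hQ.isClopenPartition i
  partRefines
    | 0 => hrefines
    | i + 1 => hQ.partRefines i
  splitsInThree
    | 0 => hsplit
    | i + 1 => hQ.splitsInThree i
  meets_of_mem_succ
    | 0 => hmeets
    | i + 1 => hQ.meets_of_mem_succ i
  mem_adjacent_of_meets
    | 0 => hmem
    | i + 1 => hQ.mem_adjacent_of_meets i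
  mem_pred_of_meets
    | 0, h => absurd h (by omega)
    | i + 1, h => hQ.mem_pred_of_meets i (by omega)
  isFine
    | 0, h => absurd h (by omega)
    | i + 1, h => hQ.isFine i (by omega)

theorem meets_iff (hP : IsSplittingChain K₀ μ A P d)
    (hP₁ : ∀ F ∈ P 0, (F ∩ K₀).Nonempty → F ∈ P 1) {i : ℕ} (hi : i ≤ d + 1) {F : Set K}
    (hF : F ∈ P i) :
    (F ∩ K₀).Nonempty ↔ (1 ≤ i ∧ F ∈ P (i - 1)) ∨ (i < d + 1 ∧ F ∈ P (i + 1)) := by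
  refine ⟨fun hmeets => ?_, ?_⟩
  · rcases i with _ | i
    · exact Or.inr ⟨by omega, hP₁ F hF hmeets⟩
    rcases hP.mem_adjacent_of_meets i F hF hmeets with h | h
    · exact Or.inl ⟨by omega, h⟩
    rcases (Nat.succ_le_succ_iff.1 hi).eq_or_lt with rfl | hlt
    · exact Or.inl ⟨by omega, hP.mem_pred_of_meets i le_rfl F hF hmeets⟩
    · exact Or.inr ⟨by omega, h⟩
  · rintro (⟨hi₁, h⟩ | ⟨-, h⟩)
    · obtain ⟨j, rfl⟩ := Nat.exists_eq_add_of_le' hi₁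
      exact hP.meets_of_mem_succ j F h hF
    · exact hP.meets_of_mem_succ i F hF h

end IsSplittingChain

theorem hasSplittingChain_of_forall_singleton (hT : IsClopenPartition A T)
    (h : ∀ B ∈ T, HasSplittingChain K₀ μ B {B}) : HasSplittingChain K₀ μ A T := by
  choose! P d hP hP₀ hP₁ using h
  obtain ⟨N, hN⟩ := (hT.finite.image d).bddAbove
  refine ⟨fun i => ⋃ B ∈ T, P B i, N,
    IsSplittingChain.biUnion hT fun B hB => (hP B hB).mono (hN (mem_image_of_mem d hB)),
    (iUnion₂_congr hP₀).trans (biUnion_of_singleton T), fun F hF hmeets => ?_⟩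
  exact subset_biUnion_of_mem hF (hP₁ F hF F rfl hmeets)

theorem HasSplittingChain.singleton_of_splitsInThree (h : HasSplittingChain K₀ μ A T) (hT : SplitsInThree T A) :
    HasSplittingChain K₀ μ A {A} := by
  obtain ⟨Q, d, hQ, rfl, hQ₁⟩ := h
  have hA : IsClopenPartition A {A} := .singleton (hQ.isClopenPartition 0).isClopen hT.nonempty
  have hA₀ : A ∉ Q 0 := hT.notMem (hQ.isClopenPartition 0).pairwiseDisjoint
  have hsub : PartRefines {A} (Q 0) := fun F hF => ⟨A, rfl, (hQ.isClopenPartition 0).subset hF⟩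
  have hcons := hQ.cons hA hsub (fun F hF hF₀ => absurd (hF ▸ hF₀) hA₀)
    (fun F hF _ => hF ▸ hT) (fun F hF hmeets => Or.inr (hQ₁ F hF hmeets))
  -- a piece meeting `K₀` must survive one stage before it is split
  by_cases hmeets : (A ∩ K₀).Nonempty
  · refine ⟨_, _, hcons.cons hA (fun F hF => ⟨A, rfl, hF.subset⟩) (fun F hF _ => hF ▸ hmeets)
      (fun F hF hF' => absurd hF hF') (fun F hF _ => Or.inl hF), rfl, fun F hF _ => hF⟩
  · exact ⟨_, _, hcons, rfl, fun F hF hF' => absurd (hF ▸ hF') hmeets⟩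

end Chain

section Cascade

variable {K : Type*} [TopologicalSpace K] {K₀ : Set K} {μ : Set (Set K)} {A C : Set K}

theorem IsOpen.infinite_of_forall_not_isOpen_singleton [T1Space K] (hC : IsOpen C)
    (hne : C.Nonempty) (h : ∀ x ∈ C, ¬IsOpen ({x} : Set K)) : C.Infinite := fun hfin =>
  let ⟨x, hx⟩ := hne
  h x hx (isOpen_singleton_of_finite_mem_nhds x (hC.mem_nhds hx) hfin)

theorem exists_isClopenPartition_splitsInThree [TotallySeparatedSpace K] (hC : IsClopen C)
    (hne : C.Nonempty) (hC' : ∀ x ∈ C, ¬IsOpen ({x} : Set K)) :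
    ∃ S, IsClopenPartition C S ∧ SplitsInThree S C := by
  have nontrivial : ∀ D ⊆ C, IsOpen D → D.Nonempty → D.Nontrivial := fun D hDC hD hD' =>
    (hD.infinite_of_forall_not_isOpen_singleton hD' fun x hx => hC' x (hDC hx)).nontrivial
  obtain ⟨x, hx, y, hy, hxy⟩ := nontrivial C subset_rfl hC.isOpen hne
  obtain ⟨U, hU, hxU, hyU⟩ := exists_isClopen_of_totally_separated hxy
  have hD : IsClopen (C \ U) := hC.diff hU
  obtain ⟨z, hz, w, hw, hzw⟩ := nontrivial (C \ U) sdiff_subset hD.isOpen ⟨y, hy, hyU⟩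
  obtain ⟨V, hV, hzV, hwV⟩ := exists_isClopen_of_totally_separated hzw
  have hCU : Disjoint (C ∩ U) (C \ U) := disjoint_sdiff_inter.symm
  obtain ⟨hS, hsplit⟩ := isClopenPartition_triple (hC.inter hU) (hD.inter hV) (hD.diff hV)
    ⟨x, hx, hxU⟩ ⟨z, hz, hzV⟩ ⟨w, hw, hwV⟩ (hCU.mono_right inter_subset_left)
    (hCU.mono_right sdiff_subset) disjoint_sdiff_inter.symm
  have hunion : C ∩ U ∪ (C \ U) ∩ V ∪ (C \ U) \ V = C := by
    rw [union_assoc, inter_union_sdiff, inter_union_sdiff]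
  rw [hunion] at hS hsplit
  exact ⟨_, hS, hsplit⟩

theorem hasSplittingChain_of_disjoint [TotallySeparatedSpace K]
    (hiso : ∀ x : K, IsOpen ({x} : Set K) → x ∈ K₀) (hA : IsClopen A) (hne : A.Nonempty)
    (hd : Disjoint A K₀) (hM : ∃ M ∈ μ, A ⊆ M) : HasSplittingChain K₀ μ A {A} := by
  have hperfect : ∀ x ∈ A, ¬IsOpen ({x} : Set K) := fun x hx hx' =>
    disjoint_left.1 hd hx (hiso x hx')
  have : ∀ C, C ⊆ A → IsClopen C → C.Nonempty →
      ∃ S, IsClopenPartition C S ∧ SplitsInThree S C := fun C hCA hC hne =>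
    exists_isClopenPartition_splitsInThree hC hne fun x hx => hperfect x (hCA hx)
  choose! S hS using this
  have hS' : ∀ T, IsClopenPartition A T → ∀ C ∈ T,
      IsClopenPartition C (S C) ∧ SplitsInThree (S C) C := fun T hT C hC =>
    hS C (hT.subset hC) (hT.isClopen_of_mem C hC) (hT.nonempty_of_mem C hC)
  set P : ℕ → Set (Set K) := fun i => (fun T => ⋃ C ∈ T, S C)^[i] {A}
  have hP_succ : ∀ i, P (i + 1) = ⋃ C ∈ P i, S C := fun i => Function.iterate_succ_apply' _ _ _
  have hP : ∀ i, IsClopenPartition A (P i) := by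
    intro i
    induction i with
    | zero => exact .singleton hA hne
    | succ i ih =>
      rw [hP_succ]
      exact ih.biUnion fun C hC => (hS' _ ih C hC).1
  have hsplit : ∀ i, ∀ F ∈ P i, SplitsInThree (P (i + 1)) F := fun i F hF => by
    rw [hP_succ]
    exact (hS' _ (hP i) F hF).2.mono (subset_biUnion_of_mem (u := S) hF)
  have hmiss : ∀ i, ∀ F ∈ P i, ¬(F ∩ K₀).Nonempty := fun i F hF ⟨x, hxF, hxK⟩ =>
    disjoint_left.1 hd ((hP i).subset hF hxF) hxK
  refine ⟨P, 0, ⟨hP, fun i F hF => ?_, fun i F hF _ => hsplit i F hF,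
    fun i F hF hF' => absurd hF' ((hsplit i F hF).notMem (hP _).pairwiseDisjoint),
    fun i F hF h => absurd h (hmiss _ F hF), fun i _ F hF h => absurd h (hmiss _ F hF),
    fun i _ F hF => ?_⟩, rfl, fun F hF h => absurd h (hmiss 0 F hF)⟩
  · rw [hP_succ, mem_iUnion₂] at hF
    obtain ⟨C, hC, hF⟩ := hF
    exact ⟨C, hC, (hS' _ (hP i) C hC).1.subset hF⟩
  · obtain ⟨M, hM, hAM⟩ := hM
    refine ⟨⟨M, hM, ((hP i).subset hF).trans hAM⟩, fun hfin => absurd hfin ?_⟩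
    exact ((hP i).isClopen_of_mem F hF).isOpen.infinite_of_forall_not_isOpen_singleton
      ((hP i).nonempty_of_mem F hF) fun x hx => hperfect x ((hP i).subset hF hx)

theorem hasSplittingChain_of_isFine [TotallySeparatedSpace K]
    (hiso : ∀ x : K, IsOpen ({x} : Set K) → x ∈ K₀) (hA : IsClopen A) (hne : A.Nonempty)
    (hfine : IsFine μ A) : HasSplittingChain K₀ μ A {A} := by
  by_cases hmeets : (A ∩ K₀).Nonempty
  · refine ⟨fun _ => {A}, 0, ⟨fun _ => .singleton hA hne, fun _ F hF => ⟨A, rfl, hF.le⟩,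
      fun _ F hF hF' => absurd hF hF', fun _ F hF _ => hF ▸ hmeets, fun _ F hF _ => Or.inl hF,
      fun _ _ F hF _ => hF, fun _ _ F hF => hF ▸ hfine⟩, rfl, fun F hF _ => hF⟩
  · exact hasSplittingChain_of_disjoint hiso hA hne
      (disjoint_iff_inter_eq_empty.2 (not_nonempty_iff_eq_empty.1 hmeets)) hfine.1

end Cascade

section Leaves

variable {K : Type*} [TopologicalSpace K] {K₀ : Set K} {μ : Set (Set K)} {A E : Set K}
  {D : Set (Set K)}

theorem IsClopenPartition.restrict (hμ : IsClopenPartition univ μ) (hA : IsClopen A) :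
    IsClopenPartition A ((A ∩ ·) '' μ \ {∅}) where
  finite := (hμ.finite.image _).subset sdiff_subset
  isClopen_of_mem := by
    rintro _ ⟨⟨M, hM, rfl⟩, -⟩
    exact hA.inter (hμ.isClopen_of_mem M hM)
  nonempty_of_mem _ hB := nonempty_iff_ne_empty.2 hB.2
  pairwiseDisjoint := by
    rintro _ ⟨⟨M, hM, rfl⟩, -⟩ _ ⟨⟨N, hN, rfl⟩, -⟩ hMN
    exact (hμ.pairwiseDisjoint hM hN fun h => hMN (h ▸ rfl)).mono inter_subset_right
      inter_subset_right
  sUnion_eq := by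
    rw [sUnion_sdiff_singleton_empty, sUnion_image, ← inter_iUnion₂, ← sUnion_eq_biUnion,
      hμ.sUnion_eq, inter_univ]

theorem isClopenPartition_image_singleton [T1Space K] (hE : IsOpen E) (hfin : E.Finite) :
    IsClopenPartition E ((fun x => {x}) '' E) where
  finite := hfin.image _
  isClopen_of_mem := by
    rintro _ ⟨x, hx, rfl⟩
    exact ⟨isClosed_singleton, isOpen_singleton_of_finite_mem_nhds x (hE.mem_nhds hx) hfin⟩
  nonempty_of_mem := by
    rintro _ ⟨x, -, rfl⟩
    exact singleton_nonempty x
  pairwiseDisjoint := by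
    rintro _ ⟨x, -, rfl⟩ _ ⟨y, -, rfl⟩ hxy
    exact disjoint_singleton.2 fun h => hxy (h ▸ rfl)
  sUnion_eq := by rw [sUnion_image, biUnion_of_singleton]

theorem exists_isClopenPartition_isFine [T1Space K] (hμ : IsClopenPartition univ μ)
    (hA : IsClopen A) : ∃ D, IsClopenPartition A D ∧ ∀ E ∈ D, IsFine μ E := by
  classical
  let S : Set K → Set (Set K) := fun E => if E.Finite then (fun x => {x}) '' E else {E}
  have hT := hμ.restrict hA
  have hS : ∀ E ∈ (A ∩ ·) '' μ \ {∅}, IsClopenPartition E (S E) := fun E hE => by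
    by_cases hfin : E.Finite
    · simpa [S, hfin] using
        isClopenPartition_image_singleton (hT.isClopen_of_mem E hE).isOpen hfin
    · simpa [S, hfin] using IsClopenPartition.singleton (hT.isClopen_of_mem E hE)
        (hT.nonempty_of_mem E hE)
  refine ⟨_, hT.biUnion hS, ?_⟩
  simp only [mem_iUnion₂]
  rintro F ⟨_, ⟨⟨M, hM, rfl⟩, -⟩, hF⟩
  by_cases hfin : (A ∩ M).Finite
  · simp only [S, hfin, if_true, mem_image] at hF
    obtain ⟨x, hx, rfl⟩ := hF
    exact ⟨⟨M, hM, singleton_subset_iff.2 hx.2⟩, fun _ => ⟨x, rfl⟩⟩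
  · simp only [S, hfin, if_false, mem_singleton_iff] at hF
    subst hF
    exact ⟨⟨M, hM, inter_subset_right⟩, fun h => absurd h hfin⟩

theorem exists_isClopenPartition_ncard_eq_two [TotallySeparatedSpace K] (hE : IsClopen E)
    (hinf : E.Infinite) :
    ∃ S, IsClopenPartition E S ∧ S.ncard = 2 ∧ ∀ B ∈ S, B.Finite → ∃ x, B = {x} := by
  obtain ⟨B₁, B₂, h₁, h₂, n₁, n₂, d₁₂, rfl, f₁, f₂⟩ : ∃ B₁ B₂ : Set K,
      IsClopen B₁ ∧ IsClopen B₂ ∧ B₁.Nonempty ∧ B₂.Nonempty ∧ Disjoint B₁ B₂ ∧ B₁ ∪ B₂ = E ∧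
      (B₁.Finite → ∃ x, B₁ = {x}) ∧ (B₂.Finite → ∃ x, B₂ = {x}) := by
    -- split off an isolated point if there is one; otherwise no nonempty open subset is finite
    by_cases hiso : ∃ x ∈ E, IsOpen ({x} : Set K)
    · obtain ⟨x, hx, hxo⟩ := hiso
      have hinf' := hinf.sdiff (finite_singleton x)
      exact ⟨{x}, E \ {x}, ⟨isClosed_singleton, hxo⟩, hE.diff ⟨isClosed_singleton, hxo⟩,
        singleton_nonempty x, hinf'.nonempty, disjoint_sdiff_right,
        union_sdiff_cancel (singleton_subset_iff.2 hx), fun _ => ⟨x, rfl⟩,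
        fun h => absurd h hinf'⟩
    · simp only [not_exists, not_and] at hiso
      have infinite : ∀ B ⊆ E, IsOpen B → B.Nonempty → B.Infinite := fun B hBE hB hne =>
        hB.infinite_of_forall_not_isOpen_singleton hne fun x hx => hiso x (hBE hx)
      obtain ⟨x, hx, y, hy, hxy⟩ := hinf.nontrivial
      obtain ⟨U, hU, hxU, hyU⟩ := exists_isClopen_of_totally_separated hxy
      exact ⟨E ∩ U, E \ U, hE.inter hU, hE.diff hU, ⟨x, hx, hxU⟩, ⟨y, hy, hyU⟩,
        disjoint_sdiff_inter.symm, inter_union_sdiff E U,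
        fun h => absurd h (infinite _ inter_subset_left (hE.inter hU).isOpen ⟨x, hx, hxU⟩),
        fun h => absurd h (infinite _ sdiff_subset (hE.diff hU).isOpen ⟨y, hy, hyU⟩)⟩
  refine ⟨_, isClopenPartition_pair h₁ h₂ n₁ n₂ d₁₂, ncard_pair (d₁₂.ne n₁.ne_empty), ?_⟩
  rintro B (rfl | rfl)
  exacts [f₁, f₂]

theorem exists_isClopenPartition_isFine_odd [TotallySeparatedSpace K]
    (hμ : IsClopenPartition univ μ) (hA : IsClopen A) (hne : A.Nonempty)
    (hsing : A.Finite → ∃ x, A = {x}) :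
    ∃ D, IsClopenPartition A D ∧ Odd D.ncard ∧ ∀ E ∈ D, IsFine μ E := by
  obtain ⟨D, hD, hfine⟩ := exists_isClopenPartition_isFine hμ hA
  by_cases hodd : Odd D.ncard
  · exact ⟨D, hD, hodd, hfine⟩
  obtain ⟨E, hE, hinf⟩ : ∃ E ∈ D, E.Infinite := by
    by_contra! hfin
    obtain ⟨x, rfl⟩ := hsing (hD.sUnion_eq ▸ hD.finite.sUnion hfin)
    obtain ⟨F, hF, -⟩ : x ∈ ⋃₀ D := hD.sUnion_eq ▸ mem_singleton x
    have hD₁ : D = {{x}} := eq_singleton_iff_unique_mem.2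
      ⟨(hD.nonempty_of_mem F hF).subset_singleton_iff.1 (hD.subset hF) ▸ hF,
        fun G hG => (hD.nonempty_of_mem G hG).subset_singleton_iff.1 (hD.subset hG)⟩
    exact hodd (by rw [hD₁, ncard_singleton]; exact odd_one)
  obtain ⟨S, hS, hS₂, hSfine⟩ :=
    exists_isClopenPartition_ncard_eq_two (hD.isClopen_of_mem E hE) hinf
  have hdisj : Disjoint (D \ {E}) S := disjoint_left.2 fun B hB hBS =>
    (hS.nonempty_of_mem B hBS).ne_empty
      (((hD.pairwiseDisjoint hB.1 hE hB.2).mono_right (hS.subset hBS)).eq_bot_of_le le_rfl)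
  refine ⟨_, hD.sdiff_singleton_union hE hS, ?_, ?_⟩
  · have hpos : 0 < D.ncard := (ncard_pos hD.finite).2 ⟨E, hE⟩
    rw [ncard_union_eq hdisj (hD.finite.subset sdiff_subset) hS.finite,
      ncard_sdiff_singleton_of_mem hE, hS₂]
    rw [Nat.odd_iff] at hodd ⊢
    omega
  · rintro B (⟨hB, -⟩ | hB)
    · exact hfine B hB
    · obtain ⟨M, hM, hEM⟩ := (hfine E hE).1
      exact ⟨⟨M, hM, (hS.subset hB).trans hEM⟩, hSfine B hB⟩

theorem hasSplittingChain_of_odd_ncard [TotallySeparatedSpace K]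
    (hiso : ∀ x : K, IsOpen ({x} : Set K) → x ∈ K₀) (hD : IsClopenPartition A D)
    (hodd : Odd D.ncard) (hfine : ∀ E ∈ D, IsFine μ E) : HasSplittingChain K₀ μ A {A} := by
  obtain ⟨k, hk⟩ := hodd
  induction k generalizing A D with
  | zero =>
    obtain ⟨E, rfl⟩ := ncard_eq_one.1 hk
    obtain rfl : E = A := (sUnion_singleton E).symm.trans hD.sUnion_eq
    exact hasSplittingChain_of_isFine hiso (hD.isClopen_of_mem E rfl)
      (hD.nonempty_of_mem E rfl) (hfine E rfl)
  | succ k ih =>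
    have leaf : ∀ E ∈ D, HasSplittingChain K₀ μ E {E} := fun E hE =>
      hasSplittingChain_of_isFine hiso (hD.isClopen_of_mem E hE) (hD.nonempty_of_mem E hE)
        (hfine E hE)
    obtain ⟨E₁, h₁, E₂, h₂, h₁₂⟩ := (one_lt_ncard hD.finite).1 (by omega)
    have hpair : {E₁, E₂} ⊆ D := insert_subset h₁ (singleton_subset_iff.2 h₂)
    set R := ⋃₀ (D \ {E₁, E₂})
    have hR : IsClopenPartition R (D \ {E₁, E₂}) := hD.of_subset sdiff_subset
    have hk' : (D \ {E₁, E₂}).ncard = 2 * k + 1 := by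
      rw [ncard_sdiff hpair, ncard_pair h₁₂]
      omega
    have hRne : R.Nonempty := by
      obtain ⟨F, hF⟩ := nonempty_of_ncard_ne_zero (s := D \ {E₁, E₂}) (by omega)
      exact (hR.nonempty_of_mem F hF).mono (hR.subset hF)
    have hdisjR : ∀ {E}, E ∈ ({E₁, E₂} : Set (Set K)) → Disjoint E R := fun {E} hE =>
      disjoint_sUnion_right.2 fun F hF =>
        hD.pairwiseDisjoint (hpair hE) hF.1 fun h => hF.2 (h ▸ hE)
    have hA : E₁ ∪ E₂ ∪ R = A := by
      rw [← hD.sUnion_eq, ← union_sdiff_cancel hpair, sUnion_union, sUnion_pair]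
    obtain ⟨hT, hsplit⟩ := isClopenPartition_triple (hD.isClopen_of_mem E₁ h₁)
      (hD.isClopen_of_mem E₂ h₂) hR.isClopen (hD.nonempty_of_mem E₁ h₁)
      (hD.nonempty_of_mem E₂ h₂) hRne (hD.pairwiseDisjoint h₁ h₂ h₁₂) (hdisjR (by simp))
      (hdisjR (by simp))
    rw [hA] at hT hsplit
    refine (hasSplittingChain_of_forall_singleton hT ?_).singleton_of_splitsInThree hsplit
    rintro B (rfl | rfl | rfl)
    exacts [leaf B h₁, leaf B h₂, ih hR (fun E hE => hfine E hE.1) hk']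

end Leaves

theorem stmt17_general (K₁ : Type*) [TopologicalSpace K₁] [CompactSpace K₁]
    [TopologicalSpace.MetrizableSpace K₁] [TotallyDisconnectedSpace K₁]
    (K₀ : Set K₁)
    (hiso : ∀ x : K₁, IsOpen ({x} : Set K₁) → x ∈ K₀)
    (ξ μ : Set (Set K₁))
    (hξ : IsFiniteClopenPartition ξ) (hμ : IsFiniteClopenPartition μ)
    (hsing : ∀ A ∈ ξ, A.Finite → ∃ x : K₁, A = {x}) :
    ∃ (n : ℕ) (c : ℕ → Set (Set K₁)),
      c 0 = ξ ∧
      (∀ i ≤ n, IsFiniteClopenPartition (c i)) ∧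
      (∀ i < n, PartRefines (c i) (c (i + 1))) ∧
      (∀ i < n, ∀ A ∈ c i, A ∉ c (i + 1) →
        ∃ B₁ ∈ c (i + 1), ∃ B₂ ∈ c (i + 1), ∃ B₃ ∈ c (i + 1),
          B₁ ≠ B₂ ∧ B₁ ≠ B₃ ∧ B₂ ≠ B₃ ∧
          B₁.Nonempty ∧ B₂.Nonempty ∧ B₃.Nonempty ∧
          Disjoint B₁ B₂ ∧ Disjoint B₁ B₃ ∧ Disjoint B₂ B₃ ∧
          A = B₁ ∪ B₂ ∪ B₃) ∧
      (∀ i ≤ n, ∀ A ∈ c i,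
        ((A ∩ K₀).Nonempty ↔
          ((1 ≤ i ∧ A ∈ c (i - 1)) ∨ (i < n ∧ A ∈ c (i + 1))))) ∧
      PartRefines μ (c n) ∧
      (∀ A ∈ c n, A.Finite → ∃ x : K₁, A = {x}) := by
  rw [← isClopenPartition_univ_iff] at hξ hμ
  obtain ⟨P, d, hP, rfl, hP₁⟩ : HasSplittingChain K₀ μ univ ξ :=
    hasSplittingChain_of_forall_singleton hξ fun A hA =>
      let ⟨_, hD, hodd, hfine⟩ := exists_isClopenPartition_isFine_odd hμ
        (hξ.isClopen_of_mem A hA) (hξ.nonempty_of_mem A hA) (hsing A hA)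
      hasSplittingChain_of_odd_ncard hiso hD hodd hfine
  exact ⟨d + 1, P, rfl, fun i _ => isClopenPartition_univ_iff.1 (hP.isClopenPartition i),
    fun i _ => hP.partRefines i, fun i _ => hP.splitsInThree i,
    fun i hi F hF => hP.meets_iff hP₁ hi hF, fun F hF => (hP.isFine _ d.le_succ F hF).1,
    fun F hF => (hP.isFine _ d.le_succ F hF).2⟩

/-- The Partition Lemma (Lemma `l.key`): with `(K₀, K₁)` satisfying condition (*), `K₁`
infinite, and `ξ, μ` finite clopen partitions of `K₁` such that every finite element of
`ξ` is a singleton, there is a finite increasing chain of finite clopen partitions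
`ξ = c 0 ≺ c 1 ≺ ⋯ ≺ c n` such that every element of `c i` not retained in `c (i+1)`
splits into three distinct nonempty elements of `c (i+1)`; an element `A ∈ c i` meets
`K₀` iff it belongs to `c (i-1) ∪ c (i+1)` (with the out-of-range partitions empty);
`c n` refines `μ`; and all finite elements of `c n` are singletons. -/
theorem stmt17 (K₁ : Type*) [TopologicalSpace K₁] [CompactSpace K₁]
    [TopologicalSpace.MetrizableSpace K₁] [TotallyDisconnectedSpace K₁] [Infinite K₁]
    (K₀ : Set K₁) (hK₀ : IsClosed K₀)
    (hiso : ∀ x : K₁, IsOpen ({x} : Set K₁) → x ∈ K₀)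
    (ξ μ : Set (Set K₁))
    (hξ : IsFiniteClopenPartition ξ) (hμ : IsFiniteClopenPartition μ)
    (hsing : ∀ A ∈ ξ, A.Finite → ∃ x : K₁, A = {x}) :
    ∃ (n : ℕ) (c : ℕ → Set (Set K₁)),
      c 0 = ξ ∧
      (∀ i ≤ n, IsFiniteClopenPartition (c i)) ∧
      (∀ i < n, PartRefines (c i) (c (i + 1))) ∧
      (∀ i < n, ∀ A ∈ c i, A ∉ c (i + 1) →
        ∃ B₁ ∈ c (i + 1), ∃ B₂ ∈ c (i + 1), ∃ B₃ ∈ c (i + 1),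
          B₁ ≠ B₂ ∧ B₁ ≠ B₃ ∧ B₂ ≠ B₃ ∧
          B₁.Nonempty ∧ B₂.Nonempty ∧ B₃.Nonempty ∧
          Disjoint B₁ B₂ ∧ Disjoint B₁ B₃ ∧ Disjoint B₂ B₃ ∧
          A = B₁ ∪ B₂ ∪ B₃) ∧
      (∀ i ≤ n, ∀ A ∈ c i,
        ((A ∩ K₀).Nonempty ↔
          ((1 ≤ i ∧ A ∈ c (i - 1)) ∨ (i < n ∧ A ∈ c (i + 1))))) ∧
      PartRefines μ (c n) ∧
      (∀ A ∈ c n, A.Finite → ∃ x : K₁, A = {x}) :=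
  stmt17_general K₁ K₀ hiso ξ μ hξ hμ hsing
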